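/- For every complex number z with Re(z) > 0 and every real θ ∈ (0,1), the integral ∫₀¹ ρ(θ/x) x^{z-1} dx equals θ/(z-1) − θ^z ζ(z)/z, where ρ(t) = t − ⌊t⌋ is the fractional part function and ζ is the Riemann zeta function (analytically continued, with the θ/(z−1) term interpreted by continuity at z = 1). -/

import Mathlib

/-!
For `Re z > 1` write `ρ(θ/x) = θ/x - ⌊θ/x⌋` and `⌊θ/x⌋ = #{n ≥ 1 : x ≤ θ/n}`; integrating
termwise gives `θ/(z-1) - ∑ₙ (θ/n)^z / z = θ/(z-1) - θ^z ζ(z)/z`. The left side is the Mellin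
transform of a bounded function supported in `(0,1)`, hence holomorphic on `Re z > 0`, and the
right side is holomorphic there away from the pole at `1`. The punctured half-plane is connected,
so the identity theorem carries the equality from `Re z > 1` to all of it.
-/

open MeasureTheory Set Filter Topology

theorem isPreconnected_re_gt_diff_singleton {c : ℝ} {a : ℂ} (ha : c < a.re) :
    IsPreconnected ({w : ℂ | c < w.re} \ {a}) := by
  set left := {w : ℂ | c < w.re} ∩ {w | w.re < a.re}
  set right := {w : ℂ | a.re < w.re}
  set upper := {w : ℂ | c < w.re} ∩ {w | a.im < w.im}
  set lower := {w : ℂ | c < w.re} ∩ {w | w.im < a.im}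
  have hcover : {w : ℂ | c < w.re} \ {a} = ((left ∪ upper) ∪ lower) ∪ right := by
    ext w
    simp only [left, right, upper, lower, Set.mem_sdiff, mem_union, mem_inter_iff, mem_ofPred_eq,
      mem_singleton_iff, Complex.ext_iff, not_and_or]
    grind
  have hleft : IsPreconnected left :=
    ((convex_halfSpace_re_gt c).inter (convex_halfSpace_re_lt a.re)).isPreconnected
  have hupper : IsPreconnected upper :=
    ((convex_halfSpace_re_gt c).inter (convex_halfSpace_im_gt a.im)).isPreconnected
  have hlower : IsPreconnected lower :=
    ((convex_halfSpace_re_gt c).inter (convex_halfSpace_im_lt a.im)).isPreconnected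
  have hright : IsPreconnected right := (convex_halfSpace_re_gt a.re).isPreconnected
  rw [hcover]
  refine .union ⟨a.re + 1, a.im + 1⟩ ?_ ?_
    (.union ⟨(c + a.re) / 2, a.im - 1⟩ ?_ ?_
      (.union ⟨(c + a.re) / 2, a.im + 1⟩ ?_ ?_ hleft hupper) hlower) hright
  all_goals simp only [left, right, upper, lower, mem_union, mem_inter_iff, mem_ofPred_eq]
  all_goals grind

theorem mellin_indicator_Ioo_zero_one {E : Type*} [NormedAddCommGroup E] [NormedSpace ℂ E]
    (g : ℝ → E) (s : ℂ) :
    mellin ((Ioo 0 1).indicator g) s = ∫ x in Ioo (0 : ℝ) 1, (x : ℂ) ^ (s - 1) • g x := by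
  simp only [mellin, ← indicator_smul_apply (Ioo 0 1) (fun t : ℝ ↦ (t : ℂ) ^ (s - 1))]
  rw [setIntegral_indicator measurableSet_Ioo, inter_eq_right.mpr Ioo_subset_Ioi_self]

theorem differentiableAt_integral_Ioo_cpow_smul {E : Type*} [NormedAddCommGroup E]
    [NormedSpace ℂ E] {g : ℝ → E} (hg : AEStronglyMeasurable g (volume.restrict (Ioo 0 1)))
    {C : ℝ} (hC : ∀ x ∈ Ioo (0 : ℝ) 1, ‖g x‖ ≤ C) {s : ℂ} (hs : 0 < s.re) :
    DifferentiableAt ℂ (fun s ↦ ∫ x in Ioo (0 : ℝ) 1, (x : ℂ) ^ (s - 1) • g x) s := by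
  simp_rw [← mellin_indicator_Ioo_zero_one]
  have hint : Integrable ((Ioo 0 1).indicator g) := by
    rw [integrable_indicator_iff measurableSet_Ioo]
    exact ⟨hg, .restrict_of_bounded (C := C) measure_Ioo_lt_top
      ((ae_restrict_iff' measurableSet_Ioo).mpr (.of_forall hC))⟩
  refine mellin_differentiableAt_of_isBigO_rpow (a := s.re + 1) (b := 0)
    (hint.locallyIntegrable.locallyIntegrableOn _) ?_ (lt_add_one _) ?_ hs
  · have hzero : (Ioo 0 1).indicator g =ᶠ[atTop] 0 := by
      filter_upwards [eventually_ge_atTop 1] with x hx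
      exact indicator_of_notMem (fun h ↦ h.2.not_ge hx) g
    exact hzero.trans_isBigO (Asymptotics.isBigO_zero _ _)
  · refine Asymptotics.IsBigO.of_bound C ?_
    filter_upwards [self_mem_nhdsWithin] with x (hx : 0 < x)
    rw [neg_zero, Real.rpow_zero, norm_one, mul_one]
    by_cases h : x ∈ Ioo 0 1
    · rw [indicator_of_mem h]; exact hC x h
    · rw [indicator_of_notMem h, norm_zero]
      exact (norm_nonneg _).trans (hC (1/2) (by norm_num))

theorem Int.fract_eq_self_sub_natFloor {R : Type*} [Ring R] [LinearOrder R]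
    [IsStrictOrderedRing R] [FloorRing R] {a : R} (ha : 0 ≤ a) : Int.fract a = a - ⌊a⌋₊ := by
  rw [Int.fract, natCast_floor_eq_intCast_floor ha]

theorem lt_natFloor_div_iff {K : Type*} [Field K] [LinearOrder K] [IsStrictOrderedRing K]
    [FloorSemiring K] {θ x : K} (hθ : 0 ≤ θ) (hx : 0 < x) (n : ℕ) :
    n < ⌊θ / x⌋₊ ↔ x ≤ θ / (n + 1) := by
  rw [Nat.lt_iff_add_one_le, Nat.le_floor_iff (div_nonneg hθ hx.le), le_div_iff₀ hx,
    le_div_iff₀ (by positivity), Nat.cast_add_one, mul_comm]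

theorem natFloor_div_smul_eq_tsum_indicator {M : Type*} [AddCommMonoid M] [TopologicalSpace M]
    {θ x : ℝ} (hθ : 0 ≤ θ) (hx : 0 < x) (f : ℝ → M) :
    ⌊θ / x⌋₊ • f x = ∑' n : ℕ, (Ioc 0 (θ / (n + 1))).indicator f x := by
  have hmem : ∀ n : ℕ, x ∈ Ioc 0 (θ / (n + 1)) ↔ n ∈ Finset.range ⌊θ / x⌋₊ := fun n ↦ by
    rw [Finset.mem_range, lt_natFloor_div_iff hθ hx, mem_Ioc, and_iff_right hx]
  rw [tsum_eq_sum fun n hn ↦ indicator_of_notMem (mt (hmem n).1 hn) f,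
    Finset.sum_congr rfl fun n hn ↦ indicator_of_mem ((hmem n).2 hn) f, Finset.sum_const,
    Finset.card_range]

theorem integrableOn_Ioc_cpow_sub_one {s : ℂ} (hs : 0 < s.re) (c : ℝ) :
    IntegrableOn (fun x : ℝ ↦ (x : ℂ) ^ (s - 1)) (Ioc 0 c) :=
  (intervalIntegral.intervalIntegrable_cpow' (by simpa using hs)).1

theorem integral_Ioc_cpow_sub_one {s : ℂ} (hs : 0 < s.re) {c : ℝ} (hc : 0 ≤ c) :
    ∫ x in Ioc 0 c, (x : ℂ) ^ (s - 1) = (c : ℂ) ^ s / s := by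
  have hs0 : s ≠ 0 := by rintro rfl; simp at hs
  rw [← intervalIntegral.integral_of_le hc, integral_cpow (.inl (by simpa using hs)),
    sub_add_cancel, Complex.ofReal_zero, Complex.zero_cpow hs0, sub_zero]

theorem integral_Ioc_norm_cpow_sub_one {s : ℂ} (hs : 0 < s.re) {c : ℝ} (hc : 0 ≤ c) :
    ∫ x in Ioc 0 c, ‖(x : ℂ) ^ (s - 1)‖ = c ^ s.re / s.re := by
  rw [setIntegral_congr_fun measurableSet_Ioc fun x hx ↦ by
      rw [Complex.norm_cpow_eq_rpow_re_of_pos hx.1, Complex.sub_re, Complex.one_re],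
    ← intervalIntegral.integral_of_le hc, integral_rpow (.inl (by linarith)), sub_add_cancel,
    Real.zero_rpow hs.ne', sub_zero]

theorem integral_Ioo_indicator_Ioc {E : Type*} [NormedAddCommGroup E] [NormedSpace ℝ E]
    {c : ℝ} (hc : c < 1) (f : ℝ → E) :
    ∫ x in Ioo 0 1, (Ioc 0 c).indicator f x = ∫ x in Ioc 0 c, f x := by
  rw [setIntegral_indicator measurableSet_Ioc,
    inter_eq_right.mpr (show Ioc 0 c ⊆ Ioo 0 1 from fun x hx ↦ ⟨hx.1, hx.2.trans_lt hc⟩)]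

theorem integral_Ioo_natFloor_div_mul_cpow {θ : ℝ} (hθ : 0 ≤ θ) (hθ1 : θ < 1) {z : ℂ}
    (hz : 1 < z.re) :
    ∫ x in Ioo (0 : ℝ) 1, (⌊θ / x⌋₊ : ℂ) * (x : ℂ) ^ (z - 1) =
      (θ : ℂ) ^ z * riemannZeta z / z := by
  have hz0 : 0 < z.re := by linarith
  have hc0 (n : ℕ) : 0 ≤ θ / (n + 1) := by positivity
  have hc1 (n : ℕ) : θ / (n + 1) < 1 := (div_le_self hθ (by simp)).trans_lt hθ1
  set F : ℕ → ℝ → ℂ := fun n ↦ (Ioc 0 (θ / (n + 1))).indicator fun x ↦ (x : ℂ) ^ (z - 1)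
  have hF_int (n : ℕ) : Integrable (F n) (volume.restrict (Ioo 0 1)) :=
    ((integrableOn_Ioc_cpow_sub_one hz0 _).integrable_indicator measurableSet_Ioc).restrict
  have hF_sum : Summable fun n ↦ ∫ x in Ioo 0 1, ‖F n x‖ := by
    have hp : Summable fun n : ℕ ↦ (((n + 1 : ℕ) : ℝ) ^ z.re)⁻¹ :=
      (summable_nat_add_iff 1).mpr (Real.summable_nat_rpow_inv.mpr hz)
    refine ((hp.mul_left (θ ^ z.re)).div_const z.re).congr fun n ↦ ?_
    simp only [F, norm_indicator_eq_indicator_norm]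
    rw [integral_Ioo_indicator_Ioc (hc1 n), integral_Ioc_norm_cpow_sub_one hz0 (hc0 n),
      Real.div_rpow hθ (by positivity)]
    push_cast
    ring
  calc ∫ x in Ioo (0 : ℝ) 1, (⌊θ / x⌋₊ : ℂ) * (x : ℂ) ^ (z - 1)
      = ∫ x in Ioo (0 : ℝ) 1, ∑' n, F n x :=
        setIntegral_congr_fun measurableSet_Ioo fun x hx ↦ by
          rw [← nsmul_eq_mul]
          exact natFloor_div_smul_eq_tsum_indicator hθ hx.1 fun x : ℝ ↦ (x : ℂ) ^ (z - 1)
    _ = ∑' n, ∫ x in Ioo (0 : ℝ) 1, F n x :=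
        (integral_tsum_of_summable_integral_norm hF_int hF_sum).symm
    _ = ∑' n : ℕ, (θ : ℂ) ^ z * (1 / (n + 1 : ℂ) ^ z) / z := tsum_congr fun n ↦ by
        rw [integral_Ioo_indicator_Ioc (hc1 n), integral_Ioc_cpow_sub_one hz0 (hc0 n),
          Complex.ofReal_div, Complex.div_cpow_ofReal_nonneg hθ (by positivity)]
        push_cast
        ring
    _ = (θ : ℂ) ^ z * riemannZeta z / z := by
      rw [tsum_div_const, tsum_mul_left, zeta_eq_tsum_one_div_nat_add_one_cpow hz]

theorem fract_div_mul_cpow_eq {θ x : ℝ} (hθ : 0 ≤ θ) (hx : 0 < x) (z : ℂ) :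
    ((Int.fract (θ / x) : ℝ) : ℂ) * (x : ℂ) ^ (z - 1) =
      θ * (x : ℂ) ^ (z - 1 - 1) - (⌊θ / x⌋₊ : ℂ) * (x : ℂ) ^ (z - 1) := by
  have hx' : (x : ℂ) ≠ 0 := Complex.ofReal_ne_zero.mpr hx.ne'
  rw [Int.fract_eq_self_sub_natFloor (div_nonneg hθ hx.le), Complex.cpow_sub (z - 1) 1 hx',
    Complex.cpow_one]
  push_cast
  ring

theorem norm_ofReal_fract_le_one (x : ℝ) : ‖((Int.fract x : ℝ) : ℂ)‖ ≤ 1 := by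
  rw [Complex.norm_real, Real.norm_of_nonneg (Int.fract_nonneg x)]
  exact (Int.fract_lt_one x).le

theorem integrableOn_Ioo_fract_div_mul_cpow (θ : ℝ) {z : ℂ} (hz : 0 < z.re) :
    IntegrableOn (fun x : ℝ ↦ ((Int.fract (θ / x) : ℝ) : ℂ) * (x : ℂ) ^ (z - 1)) (Ioo 0 1) :=
  ((integrableOn_Ioc_cpow_sub_one hz 1).mono_set Ioo_subset_Ioc_self).bdd_mul (c := 1)
    (Measurable.aestronglyMeasurable (by fun_prop)) (.of_forall fun x ↦ norm_ofReal_fract_le_one _)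

theorem integral_Ioo_fract_div_mul_cpow_of_one_lt_re {θ : ℝ} (hθ : 0 ≤ θ) (hθ1 : θ < 1) {z : ℂ}
    (hz : 1 < z.re) :
    ∫ x in Ioo (0 : ℝ) 1, ((Int.fract (θ / x) : ℝ) : ℂ) * (x : ℂ) ^ (z - 1) =
      θ / (z - 1) - θ ^ z * riemannZeta z / z := by
  have hz1 : 0 < (z - 1).re := by simpa using hz
  have hpow_int : IntegrableOn (fun x : ℝ ↦ (θ : ℂ) * (x : ℂ) ^ (z - 1 - 1)) (Ioo 0 1) :=
    ((integrableOn_Ioc_cpow_sub_one hz1 1).mono_set Ioo_subset_Ioc_self).const_mul _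
  have hdecomp := fun x (hx : x ∈ Ioo (0 : ℝ) 1) ↦ fract_div_mul_cpow_eq hθ hx.1 z
  have hfloor_int : IntegrableOn (fun x : ℝ ↦ (⌊θ / x⌋₊ : ℂ) * (x : ℂ) ^ (z - 1)) (Ioo 0 1) :=
    (hpow_int.sub (integrableOn_Ioo_fract_div_mul_cpow θ (z := z) (by linarith))).congr_fun
      (fun x hx ↦ by rw [Pi.sub_apply, hdecomp x hx, sub_sub_cancel]) measurableSet_Ioo
  rw [setIntegral_congr_fun measurableSet_Ioo hdecomp, integral_sub hpow_int hfloor_int,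
    integral_const_mul, ← integral_Ioc_eq_integral_Ioo, integral_Ioc_cpow_sub_one hz1 zero_le_one,
    integral_Ioo_natFloor_div_mul_cpow hθ hθ1 hz, Complex.ofReal_one, Complex.one_cpow,
    mul_one_div]

theorem differentiableAt_integral_Ioo_fract_div_mul_cpow (θ : ℝ) {s : ℂ} (hs : 0 < s.re) :
    DifferentiableAt ℂ
      (fun s ↦ ∫ x in Ioo (0 : ℝ) 1, ((Int.fract (θ / x) : ℝ) : ℂ) * (x : ℂ) ^ (s - 1)) s := by
  have := differentiableAt_integral_Ioo_cpow_smul (g := fun x ↦ ((Int.fract (θ / x) : ℝ) : ℂ))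
    (Measurable.aestronglyMeasurable (by fun_prop)) (fun x _ ↦ norm_ofReal_fract_le_one _) hs
  simpa only [smul_eq_mul, mul_comm] using this

/-- Müntz/Nyman-Beurling identity: for `Re z > 0` (with `z ≠ 1`, the pole being
interpreted by continuity) and `θ ∈ (0,1)`,
`∫₀¹ ρ(θ/x) x^(z-1) dx = θ/(z-1) - θ^z ζ(z)/z`. -/
theorem nyman_beurling_identity (z : ℂ) (hz : 0 < z.re) (hz1 : z ≠ 1)
    (θ : ℝ) (hθ : θ ∈ Ioo (0:ℝ) 1) :
    ∫ x in Ioo (0:ℝ) 1, ((Int.fract (θ / x) : ℝ) : ℂ) * (x : ℂ) ^ (z - 1) =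
      (θ : ℂ) / (z - 1) - (θ : ℂ) ^ z * riemannZeta z / z := by
  set U : Set ℂ := {w | 0 < w.re} \ {1}
  have hU : IsOpen U :=
    (isOpen_lt continuous_const Complex.continuous_re).sdiff isClosed_singleton
  have hlhs : AnalyticOnNhd ℂ
      (fun w ↦ ∫ x in Ioo (0 : ℝ) 1, ((Int.fract (θ / x) : ℝ) : ℂ) * (x : ℂ) ^ (w - 1)) U :=
    DifferentiableOn.analyticOnNhd (fun w hw ↦
      (differentiableAt_integral_Ioo_fract_div_mul_cpow θ hw.1).differentiableWithinAt) hU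
  have hrhs : AnalyticOnNhd ℂ (fun w ↦ (θ : ℂ) / (w - 1) - (θ : ℂ) ^ w * riemannZeta w / w) U := by
    refine DifferentiableOn.analyticOnNhd (fun w hw ↦ DifferentiableAt.differentiableWithinAt ?_) hU
    have hw0 : w ≠ 0 := by rintro rfl; simp [U] at hw
    have hw1 : w - 1 ≠ 0 := sub_ne_zero.mpr hw.2
    have hθ0 : (θ : ℂ) ≠ 0 := Complex.ofReal_ne_zero.mpr hθ.1.ne'
    have hζ := differentiableAt_riemannZeta hw.2
    fun_prop (disch := first | assumption | exact .inl hθ0)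
  have hre : {w : ℂ | 1 < w.re} ∈ 𝓝 (2 : ℂ) :=
    (isOpen_lt continuous_const Complex.continuous_re).mem_nhds (by norm_num)
  exact hlhs.eqOn_of_preconnected_of_eventuallyEq hrhs
    (isPreconnected_re_gt_diff_singleton (by norm_num)) (by norm_num [U])
    (Filter.mem_of_superset hre fun w hw ↦
      integral_Ioo_fract_div_mul_cpow_of_one_lt_re hθ.1.le hθ.2 hw) ⟨hz, hz1⟩
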